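/- Let n and t be positive integers with t ≥ 1. The number of set-valued standard tableaux of shape (e+t,e)/(t,0), for some non-negative integer e, with a total of n entries, equals 2·C(2n-3, n-2) − C(2n-2, n-2t-2). -/

import Mathlib

/-- The cells of the two-rowed skew shape `(e+t,e)/(f,0)`, rows indexed by `0` (first
row) and `1` (second row), columns `1`-indexed: the first row has cells in columns
`f+1,…,e+t`, the second row in columns `1,…,e`. -/
def InShape (e t f : ℕ) (p : ℕ × ℕ) : Prop :=
  (p.1 = 0 ∧ f + 1 ≤ p.2 ∧ p.2 ≤ e + t) ∨ (p.1 = 1 ∧ 1 ≤ p.2 ∧ p.2 ≤ e)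

/-- `T` is a set-valued standard tableau of shape `(e+t,e)/(f,0)` with entries
`1,…,n`: each cell of the shape gets a nonempty set, the sets partition `{1,…,n}`,
and every number in a cell is less than all numbers in cells weakly to the right and
weakly below (the cell itself excluded). -/
def IsSVT (n e t f : ℕ) (T : ℕ × ℕ → Finset ℕ) : Prop :=
  (∀ p, ¬ InShape e t f p → T p = ∅) ∧
  (∀ p, InShape e t f p → (T p).Nonempty) ∧
  (∀ p, ∀ k ∈ T p, k ∈ Finset.Icc 1 n) ∧
  (∀ k ∈ Finset.Icc 1 n, ∃! p : ℕ × ℕ, k ∈ T p) ∧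
  (∀ p q : ℕ × ℕ, InShape e t f p → InShape e t f q → p ≠ q → p.1 ≤ q.1 → p.2 ≤ q.2 →
    ∀ a ∈ T p, ∀ b ∈ T q, a < b)

/-- The number of entries of `T` in row `r`, for a two-rowed tableau with at most
`m` columns. -/
def rowEntries (m r : ℕ) (T : ℕ × ℕ → Finset ℕ) : ℕ :=
  ∑ j ∈ Finset.range (m + 1), (T (r, j)).card

/-- Binomial coefficient `C(a,b)` for integers `a`, `b`, with the convention that it
vanishes when `b < 0` or `b > a`. -/
def zchoose (a b : ℤ) : ℤ :=
  if 0 ≤ b ∧ b ≤ a then (a.toNat).choose b.toNat else 0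

/-!
Read the entries `1, …, n` of a tableau in increasing order and record, for each entry, its row
and whether it is the least entry of its cell. The cells of a row are opened from left to right,
so an entry lies in the `c`-th cell of its row, `c` being the number of cells of that row opened
so far: the tableau can be rebuilt from this word. If `a` and `b` count the cells opened in the
first and second row, the tableau conditions say exactly that `1 ≤ a` and `b < a + t` after each
entry of the first row, `1 ≤ b` after each entry of the second row, and `a = b` at the end.

Counting these words by their first letter gives a recursion in `(n, a, b)`. Its solution is
given by the reflection-principle differences `C(N, y) - C(N, y - 2t - 1)`: they obey Pascal's
rule, and they change sign under `y ↦ N + 2t + 1 - y`, which accounts for the barrier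
`b = a + t`.
-/

/-- `(r, new)`: the row `r` of an entry (`false` for the first row) and whether the entry is the
least one of its cell. -/
abbrev Letter := Bool × Bool

def opened (r : Bool) (u : ℕ → Letter) (k : ℕ) : ℕ :=
  ∑ i ∈ Finset.range k, if u i = (r, true) then 1 else 0

/-- The condition on the numbers `a`, `b` of cells opened in the first and second row, just
after an entry of row `r` has been read. -/
def ValidState (t a b : ℕ) : Bool → Prop
  | false => 1 ≤ a ∧ b < a + t
  | true => 1 ≤ b

def Admissible (t n a b : ℕ) (u : ℕ → Letter) : Prop :=
  a + opened false u n = b + opened true u n ∧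
    ∀ i < n, ValidState t (a + opened false u (i + 1)) (b + opened true u (i + 1)) (u i).1

def letterAt {n : ℕ} (w : Fin n → Letter) (i : ℕ) : Letter :=
  if h : i < n then w ⟨i, h⟩ else (true, true)

section Opened

variable {r : Bool} {u : ℕ → Letter}

@[simp]
lemma opened_zero : opened r u 0 = 0 := rfl

lemma opened_succ (k : ℕ) :
    opened r u (k + 1) = opened r u k + if u k = (r, true) then 1 else 0 :=
  Finset.sum_range_succ _ _

lemma opened_succ' (k : ℕ) :
    opened r u (k + 1) = (if u 0 = (r, true) then 1 else 0) + opened r (fun i => u (i + 1)) k :=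
  (Finset.sum_range_succ' _ _).trans (add_comm _ _)

lemma opened_mono : Monotone (opened r u) := fun _ _ h =>
  Finset.sum_le_sum_of_subset (Finset.range_mono h)

lemma lt_of_opened_lt {j k : ℕ} (h : opened r u j < opened r u k) : j < k :=
  lt_of_not_ge fun hkj => (opened_mono hkj).not_gt h

lemma exists_lt_opened_eq {c K : ℕ} (hc : 1 ≤ c) (hcK : c ≤ opened r u K) :
    ∃ i < K, u i = (r, true) ∧ opened r u (i + 1) = c := by
  induction K with
  | zero => simp at hcK; omega
  | succ K ih =>
    by_cases h : c ≤ opened r u K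
    · obtain ⟨i, hi, hui, hci⟩ := ih h
      exact ⟨i, by omega, hui, hci⟩
    · rw [opened_succ] at hcK
      split_ifs at hcK with hK
      · exact ⟨K, by omega, hK, by rw [opened_succ, if_pos hK]; omega⟩
      · omega

end Opened

lemma admissible_succ_iff {t n a b : ℕ} {u : ℕ → Letter} :
    Admissible t (n + 1) a b u ↔
      ValidState t (a + if u 0 = (false, true) then 1 else 0)
          (b + if u 0 = (true, true) then 1 else 0) (u 0).1 ∧
        Admissible t n (a + if u 0 = (false, true) then 1 else 0)
          (b + if u 0 = (true, true) then 1 else 0) (fun i => u (i + 1)) := by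
  simp only [Admissible, Nat.forall_lt_succ_left, opened_succ' (u := u), opened_zero, add_zero,
    add_assoc]
  tauto

lemma letterAt_coe {n : ℕ} (w : Fin n → Letter) (i : Fin n) : letterAt w i = w i :=
  dif_pos i.2

lemma letterAt_cons_zero {n : ℕ} (l : Letter) (w : Fin n → Letter) :
    letterAt (Fin.cons l w : Fin (n + 1) → Letter) 0 = l := rfl

lemma letterAt_cons_succ {n : ℕ} (l : Letter) (w : Fin n → Letter) (i : ℕ) :
    letterAt (Fin.cons l w : Fin (n + 1) → Letter) (i + 1) = letterAt w i := by
  simp only [letterAt, Nat.add_lt_add_iff_right]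
  split_ifs <;> rfl

/-- The `c`-th cell (counting from `1`) of row `r` of the shape `(e+t,e)/(t,0)`. -/
def cellAt (t : ℕ) (r : Bool) (c : ℕ) : ℕ × ℕ := (r.toNat, cond r 0 t + c)

section Cells

variable {e t : ℕ}

lemma inShape_cellAt {r : Bool} {c : ℕ} : InShape e t t (cellAt t r c) ↔ 1 ≤ c ∧ c ≤ e := by
  cases r <;> simp [InShape, cellAt]
  omega

lemma exists_eq_cellAt {p : ℕ × ℕ} (hp : InShape e t t p) :
    ∃ r c, 1 ≤ c ∧ c ≤ e ∧ p = cellAt t r c := by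
  obtain ⟨p1, p2⟩ := p
  rcases hp with ⟨rfl, h1, h2⟩ | ⟨rfl, h1, h2⟩
  · exact ⟨false, p2 - t, by omega, by omega, by simp only [cellAt]; ext <;> simp; omega⟩
  · exact ⟨true, p2, h1, h2, by simp [cellAt]⟩

lemma cellAt_inj {r r' : Bool} {c c' : ℕ} :
    cellAt t r c = cellAt t r' c' ↔ r = r' ∧ c = c' := by
  cases r <;> cases r' <;> simp [cellAt]

lemma cellAt_le_cellAt {r r' : Bool} {c c' : ℕ} (h1 : (cellAt t r c).1 ≤ (cellAt t r' c').1)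
    (h2 : (cellAt t r c).2 ≤ (cellAt t r' c').2) :
    (r = r' ∧ c ≤ c') ∨ (r = false ∧ r' = true ∧ t + c ≤ c') := by
  cases r <;> cases r' <;> simp_all [cellAt]

end Cells

def letterCell (t : ℕ) (u : ℕ → Letter) (i : ℕ) : ℕ × ℕ :=
  cellAt t (u i).1 (opened (u i).1 u (i + 1))

def toTableau (n t : ℕ) (u : ℕ → Letter) (p : ℕ × ℕ) : Finset ℕ :=
  ((Finset.range n).filter fun i => letterCell t u i = p).image (· + 1)

lemma mem_toTableau {n t : ℕ} {u : ℕ → Letter} {p : ℕ × ℕ} {k : ℕ} :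
    k ∈ toTableau n t u p ↔ ∃ i < n, letterCell t u i = p ∧ i + 1 = k := by
  simp [toTableau, and_assoc]

namespace Admissible

variable {t n : ℕ} {u : ℕ → Letter}

lemma opened_eq (hu : Admissible t n 0 0 u) (r : Bool) : opened r u n = opened false u n := by
  cases r
  · rfl
  · simpa using hu.1.symm

lemma validState (hu : Admissible t n 0 0 u) {i : ℕ} (hi : i < n) :
    ValidState t (opened false u (i + 1)) (opened true u (i + 1)) (u i).1 := by
  simpa using hu.2 i hi

lemma one_le_opened (hu : Admissible t n 0 0 u) {i : ℕ} (hi : i < n) :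
    1 ≤ opened (u i).1 u (i + 1) := by
  have := hu.validState hi
  cases h : (u i).1 <;> simp only [h, ValidState] at this ⊢ <;> omega

lemma isSVT (hu : Admissible t n 0 0 u) : IsSVT n (opened false u n) t t (toTableau n t u) := by
  refine ⟨?_, ?_, ?_, ?_, ?_⟩
  · refine fun p hp => Finset.eq_empty_of_forall_notMem fun k hk => hp ?_
    obtain ⟨i, hi, rfl, -⟩ := mem_toTableau.1 hk
    exact inShape_cellAt.2 ⟨hu.one_le_opened hi, (opened_mono hi).trans (hu.opened_eq _).le⟩
  · intro p hp
    obtain ⟨r, c, hc1, hce, rfl⟩ := exists_eq_cellAt hp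
    obtain ⟨i, hi, hui, hci⟩ := exists_lt_opened_eq hc1 (hce.trans (hu.opened_eq r).ge)
    exact ⟨i + 1, mem_toTableau.2 ⟨i, hi, by rw [letterCell, hui, hci], rfl⟩⟩
  · rintro p k hk
    obtain ⟨i, hi, -, rfl⟩ := mem_toTableau.1 hk
    exact Finset.mem_Icc.2 ⟨by omega, hi⟩
  · intro k hk
    obtain ⟨i, rfl⟩ : ∃ i, k = i + 1 := ⟨k - 1, by simp at hk; omega⟩
    refine ⟨letterCell t u i, mem_toTableau.2 ⟨i, by simpa using hk, rfl, rfl⟩, fun p hp => ?_⟩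
    obtain ⟨j, -, rfl, hji⟩ := mem_toTableau.1 hp
    rw [Nat.add_right_cancel hji]
  · intro p q _ _ hpq h1 h2 x hx y hy
    obtain ⟨i, hi, rfl, rfl⟩ := mem_toTableau.1 hx
    obtain ⟨j, -, rfl, rfl⟩ := mem_toTableau.1 hy
    rcases cellAt_le_cellAt h1 h2 with ⟨hr, hc⟩ | ⟨hri, hrj, hc⟩
    · rw [← hr] at hc
      refine lt_of_opened_lt (lt_of_le_of_ne hc fun h => hpq ?_)
      rw [letterCell, letterCell, ← hr, h]
    · have hv := hu.validState hi
      rw [hri] at hv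
      rw [hri, hrj] at hc
      exact lt_of_opened_lt (r := true) (u := u) (by have := hv.2; omega)

lemma new_iff (hu : Admissible t n 0 0 u) {i : ℕ} (hi : i < n) :
    (u i).2 = true ↔ ∀ j ∈ toTableau n t u (letterCell t u i), i + 1 ≤ j := by
  constructor
  · intro hnew _ hj
    obtain ⟨j, -, hcell, rfl⟩ := mem_toTableau.1 hj
    obtain ⟨hr, hc⟩ := cellAt_inj.1 hcell
    by_contra hji
    have := opened_mono (r := (u i).1) (u := u) (show j + 1 ≤ i by omega)
    rw [hr, opened_succ (k := i), if_pos (show u i = ((u i).1, true) from Prod.ext rfl hnew)] at hc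
    omega
  · intro hmin
    obtain ⟨j, hj, huj, hcj⟩ := exists_lt_opened_eq (hu.one_le_opened hi) le_rfl
    have hij : i + 1 ≤ j + 1 :=
      hmin (j + 1) (mem_toTableau.2 ⟨j, by omega, by rw [letterCell, huj, hcj]; rfl, rfl⟩)
    obtain rfl : j = i := by omega
    rw [huj]

end Admissible

lemma toTableau_injective {t n : ℕ} {u u' : ℕ → Letter} (hu : Admissible t n 0 0 u)
    (hu' : Admissible t n 0 0 u') (h : toTableau n t u = toTableau n t u') {i : ℕ} (hi : i < n) :
    u i = u' i := by
  have hcell : letterCell t u' i = letterCell t u i := by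
    have hmem : i + 1 ∈ toTableau n t u (letterCell t u i) := mem_toTableau.2 ⟨i, hi, rfl, rfl⟩
    rw [h] at hmem
    obtain ⟨j, -, hj, hji⟩ := mem_toTableau.1 hmem
    rwa [Nat.add_right_cancel hji] at hj
  have hnew : (u i).2 = true ↔ (u' i).2 = true := by
    rw [hu.new_iff hi, hu'.new_iff hi, h, hcell]
  exact Prod.ext (cellAt_inj.1 hcell).1.symm (Bool.eq_iff_iff.2 hnew)

noncomputable def cellIndex (t : ℕ) (T : ℕ × ℕ → Finset ℕ) (k : ℕ) : Bool × ℕ :=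
  Classical.epsilon fun q => k ∈ T (cellAt t q.1 q.2)

noncomputable def toWord (n t : ℕ) (T : ℕ × ℕ → Finset ℕ) : Fin n → Letter := fun i =>
  let q := cellIndex t T (i + 1)
  (q.1, decide (∀ j ∈ T (cellAt t q.1 q.2), i + 1 ≤ j))

namespace IsSVT

variable {n e t : ℕ} {T : ℕ × ℕ → Finset ℕ}

lemma inShape_of_mem (hT : IsSVT n e t t T) {p : ℕ × ℕ} {k : ℕ} (hk : k ∈ T p) :
    InShape e t t p := by
  by_contra hp
  simp [hT.1 p hp] at hk

lemma lt_of_mem (hT : IsSVT n e t t T) {p q : ℕ × ℕ} {j k : ℕ} (hj : j ∈ T p) (hk : k ∈ T q)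
    (hpq : p ≠ q) (h1 : p.1 ≤ q.1) (h2 : p.2 ≤ q.2) : j < k :=
  hT.2.2.2.2 p q (hT.inShape_of_mem hj) (hT.inShape_of_mem hk) hpq h1 h2 j hj k hk

lemma lt_of_mem_row (hT : IsSVT n e t t T) {r : Bool} {c c' j k : ℕ}
    (hj : j ∈ T (cellAt t r c)) (hk : k ∈ T (cellAt t r c')) (hc : c < c') : j < k :=
  hT.lt_of_mem hj hk (by simp [cellAt_inj]; omega) le_rfl (by simp [cellAt]; omega)

lemma lt_of_mem_first_second (hT : IsSVT n e t t T) {c c' j k : ℕ}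
    (hj : j ∈ T (cellAt t false c)) (hk : k ∈ T (cellAt t true c')) (hc : t + c ≤ c') : j < k :=
  hT.lt_of_mem hj hk (by simp [cellAt_inj]) (by simp [cellAt]) (by simpa [cellAt] using hc)

lemma cellIndex_spec (hT : IsSVT n e t t T) {k : ℕ} (hk : k ∈ Finset.Icc 1 n) :
    k ∈ T (cellAt t (cellIndex t T k).1 (cellIndex t T k).2) ∧
      1 ≤ (cellIndex t T k).2 ∧ (cellIndex t T k).2 ≤ e := by
  obtain ⟨p, hkp, -⟩ := hT.2.2.2.1 k hk
  obtain ⟨r, c, -, -, rfl⟩ := exists_eq_cellAt (hT.inShape_of_mem hkp)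
  have hmem : k ∈ T (cellAt t (cellIndex t T k).1 (cellIndex t T k).2) :=
    Classical.epsilon_spec (p := fun q : Bool × ℕ => k ∈ T (cellAt t q.1 q.2)) ⟨(r, c), hkp⟩
  exact ⟨hmem, inShape_cellAt.1 (hT.inShape_of_mem hmem)⟩

lemma cellIndex_eq (hT : IsSVT n e t t T) {r : Bool} {c k : ℕ} (hk : k ∈ T (cellAt t r c)) :
    cellIndex t T k = (r, c) := by
  have hkI := hT.2.2.1 _ k hk
  obtain ⟨hr, hc⟩ := cellAt_inj.1 ((hT.2.2.2.1 k hkI).unique hk (hT.cellIndex_spec hkI).1)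
  exact Prod.ext hr.symm hc.symm

lemma letterAt_toWord (hT : IsSVT n e t t T) {r : Bool} {c i : ℕ}
    (hi : i + 1 ∈ T (cellAt t r c)) :
    letterAt (toWord n t T) i = (r, decide (∀ j ∈ T (cellAt t r c), i + 1 ≤ j)) := by
  have hin : i < n := by have := Finset.mem_Icc.1 (hT.2.2.1 _ _ hi); omega
  simp only [letterAt, dif_pos hin, toWord, hT.cellIndex_eq hi]

/-- A new letter of row `r` among the first `K` ones is the least entry of a cell of row `r`
that has an entry `≤ K`. -/
lemma opened_toWord (hT : IsSVT n e t t T) (r : Bool) {K : ℕ} (hK : K ≤ n) :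
    opened r (letterAt (toWord n t T)) K =
      ((Finset.Icc 1 e).filter fun c => ∃ j ∈ T (cellAt t r c), j ≤ K).card := by
  rw [opened, ← Finset.card_filter]
  refine Finset.card_bij (fun i _ => (cellIndex t T (i + 1)).2) ?_ ?_ ?_
  · intro i hi
    simp only [Finset.mem_filter, Finset.mem_range] at hi
    obtain ⟨hmem, hc⟩ := hT.cellIndex_spec (k := i + 1) (Finset.mem_Icc.2 ⟨by omega, by omega⟩)
    rw [hT.letterAt_toWord hmem, Prod.mk.injEq] at hi
    rw [hi.2.1] at hmem
    exact Finset.mem_filter.2 ⟨Finset.mem_Icc.2 hc, i + 1, hmem, by omega⟩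
  · intro i hi i' hi' hii'
    simp only [Finset.mem_filter, Finset.mem_range] at hi hi'
    obtain ⟨hmem, -⟩ := hT.cellIndex_spec (k := i + 1) (Finset.mem_Icc.2 ⟨by omega, by omega⟩)
    obtain ⟨hmem', -⟩ := hT.cellIndex_spec (k := i' + 1) (Finset.mem_Icc.2 ⟨by omega, by omega⟩)
    rw [hT.letterAt_toWord hmem, Prod.mk.injEq, decide_eq_true_iff] at hi
    rw [hT.letterAt_toWord hmem', Prod.mk.injEq, decide_eq_true_iff] at hi'
    rw [hi.2.1, hii'] at hmem hi
    rw [hi'.2.1] at hmem' hi'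
    have := hi.2.2 _ hmem'
    have := hi'.2.2 _ hmem
    omega
  · intro c hc
    obtain ⟨-, j, hj, hjK⟩ := Finset.mem_filter.1 hc
    have hne : (T (cellAt t r c)).Nonempty := ⟨j, hj⟩
    obtain ⟨i, hi⟩ : ∃ i, (T (cellAt t r c)).min' hne = i + 1 :=
      ⟨_, (Nat.succ_pred_eq_of_pos (Finset.mem_Icc.1 (hT.2.2.1 _ _ (Finset.min'_mem _ hne))).1).symm⟩
    have hmem : i + 1 ∈ T (cellAt t r c) := hi ▸ Finset.min'_mem _ hne
    have hmin : ∀ j ∈ T (cellAt t r c), i + 1 ≤ j := fun j hj => hi ▸ Finset.min'_le _ j hj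
    refine ⟨i, Finset.mem_filter.2 ⟨Finset.mem_range.2 ?_, ?_⟩, by rw [hT.cellIndex_eq hmem]⟩
    · have := hmin j hj
      omega
    · rw [hT.letterAt_toWord hmem, decide_eq_true hmin]

lemma opened_toWord_of_mem (hT : IsSVT n e t t T) {r : Bool} {c k : ℕ}
    (hk : k ∈ T (cellAt t r c)) : opened r (letterAt (toWord n t T)) k = c := by
  have hkI := Finset.mem_Icc.1 (hT.2.2.1 _ k hk)
  have hce : c ≤ e := (inShape_cellAt.1 (hT.inShape_of_mem hk)).2
  rw [hT.opened_toWord r hkI.2, ← Nat.add_sub_cancel c 1, ← Nat.card_Icc 1 c]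
  congr 1
  ext c'
  simp only [Finset.mem_filter, Finset.mem_Icc]
  constructor
  · rintro ⟨⟨hc1, -⟩, j, hj, hjk⟩
    refine ⟨hc1, not_lt.1 fun hcc => ?_⟩
    have := hT.lt_of_mem_row hk hj hcc
    omega
  · rintro ⟨hc1, hcc⟩
    refine ⟨⟨hc1, hcc.trans hce⟩, ?_⟩
    rcases hcc.lt_or_eq with hcc | rfl
    · obtain ⟨j, hj⟩ := hT.2.1 _ (inShape_cellAt.2 ⟨hc1, by omega⟩)
      exact ⟨j, hj, (hT.lt_of_mem_row hj hk hcc).le⟩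
    · exact ⟨k, hk, le_rfl⟩

lemma opened_toWord_self (hT : IsSVT n e t t T) (r : Bool) :
    opened r (letterAt (toWord n t T)) n = e := by
  rw [hT.opened_toWord r le_rfl, Finset.filter_true_of_mem, Nat.card_Icc, Nat.add_sub_cancel]
  intro c hc
  obtain ⟨j, hj⟩ := hT.2.1 _ (inShape_cellAt.2 (Finset.mem_Icc.1 hc))
  exact ⟨j, hj, (Finset.mem_Icc.1 (hT.2.2.1 _ j hj)).2⟩

lemma opened_true_toWord_lt (hT : IsSVT n e t t T) {c k : ℕ} (hk : k ∈ T (cellAt t false c)) :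
    opened true (letterAt (toWord n t T)) k < c + t := by
  have hkI := Finset.mem_Icc.1 (hT.2.2.1 _ k hk)
  have hc1 : 1 ≤ c := (inShape_cellAt.1 (hT.inShape_of_mem hk)).1
  rw [hT.opened_toWord true hkI.2]
  calc _ ≤ (Finset.Icc 1 (t + c - 1)).card := Finset.card_le_card fun c' hc' => by
        obtain ⟨hc'I, j, hj, hjk⟩ := Finset.mem_filter.1 hc'
        refine Finset.mem_Icc.2 ⟨(Finset.mem_Icc.1 hc'I).1, not_lt.1 fun hcc => ?_⟩
        have := hT.lt_of_mem_first_second hk hj (by omega)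
        omega
    _ < c + t := by rw [Nat.card_Icc]; omega

lemma letterCell_toWord (hT : IsSVT n e t t T) {i : ℕ} (hi : i < n) :
    letterCell t (letterAt (toWord n t T)) i =
      cellAt t (cellIndex t T (i + 1)).1 (cellIndex t T (i + 1)).2 := by
  obtain ⟨hmem, -⟩ := hT.cellIndex_spec (k := i + 1) (Finset.mem_Icc.2 ⟨by omega, hi⟩)
  rw [letterCell, hT.letterAt_toWord hmem, hT.opened_toWord_of_mem hmem]

lemma admissible_toWord (hT : IsSVT n e t t T) :
    Admissible t n 0 0 (letterAt (toWord n t T)) := by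
  refine ⟨by rw [hT.opened_toWord_self, hT.opened_toWord_self], fun i hi => ?_⟩
  obtain ⟨hmem, hc1, -⟩ := hT.cellIndex_spec (k := i + 1) (Finset.mem_Icc.2 ⟨by omega, hi⟩)
  rw [hT.letterAt_toWord hmem, zero_add, zero_add]
  cases hr : (cellIndex t T (i + 1)).1 <;> rw [hr] at hmem <;>
    simp only [ValidState, hT.opened_toWord_of_mem hmem]
  · exact ⟨hc1, hT.opened_true_toWord_lt hmem⟩
  · exact hc1

lemma toTableau_toWord (hT : IsSVT n e t t T) : toTableau n t (letterAt (toWord n t T)) = T := by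
  funext p
  ext k
  rw [mem_toTableau]
  constructor
  · rintro ⟨i, hi, rfl, rfl⟩
    rw [hT.letterCell_toWord hi]
    exact (hT.cellIndex_spec (Finset.mem_Icc.2 ⟨by omega, hi⟩)).1
  · intro hk
    have hkI := hT.2.2.1 p k hk
    obtain ⟨i, rfl⟩ : ∃ i, k = i + 1 := ⟨k - 1, by simp at hkI; omega⟩
    have hi : i < n := by simp at hkI; omega
    refine ⟨i, hi, ?_, rfl⟩
    rw [hT.letterCell_toWord hi]
    exact (hT.2.2.2.1 _ hkI).unique (hT.cellIndex_spec hkI).1 hk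

end IsSVT

theorem natCard_isSVT (n t : ℕ) :
    Nat.card {p : ℕ × (ℕ × ℕ → Finset ℕ) // IsSVT n p.1 t t p.2} =
      Nat.card {w : Fin n → Letter // Admissible t n 0 0 (letterAt w)} := by
  refine (Nat.card_eq_of_bijective (fun w => ⟨(opened false (letterAt w.1) n,
    toTableau n t (letterAt w.1)), w.2.isSVT⟩) ⟨?_, ?_⟩).symm
  · rintro ⟨w, hw⟩ ⟨w', hw'⟩ h
    simp only [Subtype.mk.injEq, Prod.mk.injEq] at h
    refine Subtype.ext (funext fun i => ?_)
    simpa only [letterAt_coe] using toTableau_injective hw hw' h.2 i.2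
  · rintro ⟨⟨e, T⟩, hT⟩
    refine ⟨⟨toWord n t T, hT.admissible_toWord⟩, ?_⟩
    simp only [Subtype.mk.injEq, Prod.mk.injEq]
    exact ⟨hT.opened_toWord_self false, hT.toTableau_toWord⟩

def admissibleCount (t : ℕ) : ℕ → ℕ → ℕ → ℕ
  | 0, a, b => if a = b then 1 else 0
  | m + 1, a, b =>
      (if b ≤ a + t then admissibleCount t m (a + 1) b else 0) +
      (if 1 ≤ a ∧ b < a + t then admissibleCount t m a b else 0) +
      admissibleCount t m a (b + 1) +
      (if 1 ≤ b then admissibleCount t m a b else 0)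

lemma natCard_subtype_and {α : Type*} (p : Prop) [Decidable p] (q : α → Prop) :
    Nat.card {x // p ∧ q x} = if p then Nat.card {x // q x} else 0 := by
  split_ifs with hp
  · simp only [hp, true_and]
  · simp [hp]

theorem natCard_admissible (t m a b : ℕ) :
    Nat.card {w : Fin m → Letter // Admissible t m a b (letterAt w)} =
      admissibleCount t m a b := by
  induction m generalizing a b with
  | zero =>
    simp only [Admissible, opened, Finset.range_zero, Finset.sum_empty, add_zero,
      Nat.not_lt_zero, IsEmpty.forall_iff, implies_true, and_true, admissibleCount]
    split_ifs with h <;> simp [h]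
  | succ m ih =>
    let e : {w : Fin (m + 1) → Letter // Admissible t (m + 1) a b (letterAt w)} ≃
        Σ l : Letter, {w : Fin m → Letter // Admissible t (m + 1) a b (letterAt (Fin.cons l w))} :=
      ((Fin.consEquiv fun _ => Letter).subtypeEquiv fun _ => Iff.rfl).symm.trans
        (Equiv.subtypeProdEquivSigmaSubtype fun l w =>
          Admissible t (m + 1) a b (letterAt (Fin.cons l w)))
    have hshift (l : Letter) (w : Fin m → Letter) :
        (fun i => letterAt (Fin.cons l w : Fin (m + 1) → Letter) (i + 1)) = letterAt w :=
      funext (letterAt_cons_succ l w)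
    rw [Nat.card_congr e, Nat.card_sigma, Fintype.sum_prod_type]
    simp only [admissible_succ_iff, hshift, letterAt_cons_zero, Fintype.sum_bool, ValidState,
      Prod.mk.injEq, Bool.true_eq_false, Bool.false_eq_true, and_true, and_false,
      if_true, if_false, add_zero, natCard_subtype_and, ih, admissibleCount]
    split_ifs <;> omega

lemma zchoose_natCast (a b : ℕ) : zchoose a b = a.choose b := by
  unfold zchoose
  split_ifs with h
  · simp
  · rw [Nat.choose_eq_zero_of_lt (by omega), Nat.cast_zero]

lemma zchoose_of_neg {a b : ℤ} (h : b < 0) : zchoose a b = 0 :=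
  if_neg (by omega)

lemma zchoose_of_lt {a b : ℤ} (h : a < b) : zchoose a b = 0 :=
  if_neg (by omega)

lemma zchoose_zero_left (b : ℤ) : zchoose 0 b = if b = 0 then 1 else 0 := by
  unfold zchoose
  split_ifs <;> first | omega | simp_all

lemma zchoose_succ {a : ℤ} (ha : 0 ≤ a) (b : ℤ) :
    zchoose (a + 1) b = zchoose a b + zchoose a (b - 1) := by
  lift a to ℕ using ha
  rcases lt_or_ge b 0 with hb | hb
  · simp [zchoose_of_neg, hb, show b - 1 < 0 by omega]
  lift b to ℕ using hb
  cases b with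
  | zero =>
    have h1 : zchoose ((a : ℤ) + 1) 0 = 1 := by simpa using zchoose_natCast (a + 1) 0
    have h2 : zchoose (a : ℤ) 0 = 1 := by simpa using zchoose_natCast a 0
    simp [h1, h2, zchoose_of_neg]
  | succ b =>
    rw [← Nat.cast_succ, Nat.cast_succ b, add_sub_cancel_right, ← Nat.cast_succ,
      zchoose_natCast, zchoose_natCast, zchoose_natCast, Nat.choose_succ_succ, Nat.cast_add, add_comm]

lemma zchoose_symm {a : ℤ} (ha : 0 ≤ a) (b : ℤ) : zchoose a (a - b) = zchoose a b := by
  lift a to ℕ using ha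
  rcases lt_or_ge b 0 with hb | hb
  · rw [zchoose_of_neg hb, zchoose_of_lt (by omega)]
  rcases lt_or_ge (a : ℤ) b with hab | hab
  · rw [zchoose_of_lt hab, zchoose_of_neg (by omega)]
  lift b to ℕ using hb
  rw [← Nat.cast_sub (by omega), zchoose_natCast, zchoose_natCast,
    Nat.choose_symm (by omega)]

def reflectedChoose (t : ℕ) (N y : ℤ) : ℤ :=
  zchoose N y - zchoose N (y - 2 * t - 1)

lemma reflectedChoose_succ (t : ℕ) {N : ℤ} (hN : 0 ≤ N) (y : ℤ) :
    reflectedChoose t (N + 1) y = reflectedChoose t N y + reflectedChoose t N (y - 1) := by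
  simp only [reflectedChoose, zchoose_succ hN]
  ring_nf

lemma reflectedChoose_reflect (t : ℕ) {N : ℤ} (hN : 0 ≤ N) (y : ℤ) :
    reflectedChoose t N (N + 2 * t + 1 - y) = - reflectedChoose t N y := by
  unfold reflectedChoose
  rw [← zchoose_symm hN y, ← zchoose_symm hN (y - 2 * t - 1)]
  ring_nf

lemma reflectedChoose_add_two (t : ℕ) {N : ℤ} (hN : 0 ≤ N) (y : ℤ) :
    reflectedChoose t (N + 2) y = reflectedChoose t N y + 2 * reflectedChoose t N (y - 1)
      + reflectedChoose t N (y - 2) := by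
  rw [show N + 2 = N + 1 + 1 by ring, reflectedChoose_succ t (by omega),
    reflectedChoose_succ t hN, reflectedChoose_succ t hN, sub_sub, one_add_one_eq_two]
  ring

theorem admissibleCount_of_pos (t m : ℕ) {a b : ℕ} (ha : 1 ≤ a) (hb : 1 ≤ b) :
    (admissibleCount t m a b : ℤ) =
      if b ≤ a + t then reflectedChoose t (2 * m) (m + b - a) else 0 := by
  induction m generalizing a b with
  | zero =>
    simp only [admissibleCount, reflectedChoose, Nat.cast_zero, mul_zero, zero_add,
      zchoose_zero_left]
    split_ifs <;> omega
  | succ m ih =>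
    have hm : (0 : ℤ) ≤ 2 * m := by positivity
    have hstep := reflectedChoose_add_two t hm (m + 1 + b - a)
    simp only [admissibleCount, Nat.cast_add, Nat.cast_ite, Nat.cast_zero]
    rw [ih (by omega) hb, ih ha hb, ih ha (by omega)]
    push_cast
    rw [show 2 * ((m : ℤ) + 1) = 2 * m + 2 by ring, hstep]
    rcases lt_trichotomy b (a + t) with h | h | h
    · simp only [h.le, ha, hb, h, show b ≤ a + 1 + t by omega, show b + 1 ≤ a + t by omega,
        and_self, if_true]
      ring_nf
    · -- on the barrier one copy of the middle term is missing; by reflection, the term beyond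
      -- the barrier in `reflectedChoose_add_two` cancels it
      have hrefl := reflectedChoose_reflect t hm (m + b - a)
      have hb' : (b : ℤ) = a + t := by exact_mod_cast h
      simp only [h.le, h.not_lt, show b ≤ a + 1 + t by omega, show ¬ b + 1 ≤ a + t by omega,
        and_false, if_true, if_false, hb]
      rw [hb'] at hrefl ⊢
      ring_nf at hrefl ⊢
      linarith
    · simp only [show ¬ b ≤ a + t by omega, show ¬ b < a + t by omega,
        show ¬ b + 1 ≤ a + t by omega, and_false, if_false, ite_self, add_zero]

theorem admissibleCount_succ_zero_right (t m : ℕ) {a : ℕ} (ha : 1 ≤ a) :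
    (admissibleCount t (m + 1) a 0 : ℤ) = reflectedChoose t (2 * m + 1) (m + 1 - a) := by
  induction m generalizing a with
  | zero =>
    have hzero : admissibleCount t 1 a 0 = if a = 1 then 1 else 0 := by
      simp only [admissibleCount]
      split_ifs <;> simp_all
    rw [hzero, reflectedChoose, Nat.cast_zero, mul_zero, zero_add,
      zchoose_of_neg (by omega : (1 : ℤ) - a - 2 * t - 1 < 0)]
    rcases eq_or_lt_of_le ha with rfl | ha'
    · rfl
    · simp [show a ≠ 1 by omega, zchoose_of_neg (show (1 : ℤ) - a < 0 by omega)]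
  | succ m ih =>
    have hm : (0 : ℤ) ≤ 2 * m + 1 := by positivity
    have p1 := reflectedChoose_succ t (N := 2 * m + 2) (by omega) (m + 2 - a)
    have p2 := reflectedChoose_succ t hm (m + 1 - a)
    rw [admissibleCount, if_pos (by omega), if_pos (by omega), if_neg (by omega), zero_add]
    push_cast
    rw [ih (by omega), ih ha, admissibleCount_of_pos t (m + 1) ha le_rfl, if_pos (by omega)]
    push_cast
    ring_nf at p1 p2 ⊢
    linarith

theorem admissibleCount_succ_zero_left (t m : ℕ) {b : ℕ} (hb : 1 ≤ b) :
    (admissibleCount t (m + 1) 0 b : ℤ) =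
      if b ≤ t then reflectedChoose t (2 * m + 1) (m + b) else 0 := by
  induction m generalizing b with
  | zero =>
    have hzero : admissibleCount t 1 0 b = if b ≤ t ∧ b = 1 then 1 else 0 := by
      simp only [admissibleCount]
      split_ifs <;> simp_all <;> omega
    rw [hzero, Nat.cast_zero, mul_zero, zero_add, zero_add]
    split_ifs with h h'
    · obtain ⟨ht, rfl⟩ := h
      rw [reflectedChoose, zchoose_of_neg (b := ((1 : ℕ) : ℤ) - 2 * t - 1) (by omega)]
      rfl
    · omega
    · rw [reflectedChoose, zchoose_of_lt (b := (b : ℤ)) (by omega),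
        zchoose_of_neg (b := (b : ℤ) - 2 * t - 1) (by omega)]
      rfl
    · rfl
  | succ m ih =>
    have hm : (0 : ℤ) ≤ 2 * m + 1 := by positivity
    have p1 := reflectedChoose_succ t (N := 2 * m + 2) (by omega) (m + 1 + b)
    have p2 := reflectedChoose_succ t hm (m + 1 + b)
    rw [admissibleCount, if_neg (by omega : ¬ (1 ≤ 0 ∧ b < 0 + t)), if_pos hb, zero_add]
    push_cast
    rw [ih (by omega), ih hb]
    rcases lt_trichotomy b t with h | rfl | h
    · rw [if_pos h.le, admissibleCount_of_pos t (m + 1) le_rfl hb, if_pos (by omega),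
        if_pos (by omega : b + 1 ≤ t), if_pos h.le, if_pos h.le]
      push_cast
      ring_nf at p1 p2 ⊢
      linarith
    · have hrefl := reflectedChoose_reflect b hm (m + 1 + b)
      rw [if_pos le_rfl, admissibleCount_of_pos b (m + 1) le_rfl hb, if_pos (by omega),
        if_neg (by omega), if_pos le_rfl, if_pos le_rfl]
      push_cast
      ring_nf at p1 p2 hrefl ⊢
      linarith
    · rw [if_neg (by omega), if_neg (by omega), if_neg (by omega), if_neg (by omega)]
      simp

theorem admissibleCount_add_two_zero_zero (m : ℕ) {t : ℕ} (ht : 1 ≤ t) :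
    (admissibleCount t (m + 2) 0 0 : ℤ) =
      2 * zchoose (2 * m + 1) m - zchoose (2 * m + 2) (m - 2 * t) := by
  have hN : (0 : ℤ) ≤ 2 * m + 1 := by positivity
  have hpascal := zchoose_succ hN (m - 2 * t)
  have hsymm := zchoose_symm hN m
  rw [admissibleCount, if_pos (by omega), if_neg (by omega), if_neg (by omega), zero_add,
    add_zero, add_zero]
  push_cast
  rw [admissibleCount_succ_zero_right t m le_rfl, admissibleCount_succ_zero_left t m le_rfl,
    if_pos ht, reflectedChoose, reflectedChoose]
  ring_nf at hpascal hsymm ⊢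
  linarith

/-- The number of set-valued standard tableaux of skew shape `(e+t,e)/(t,0)`, for some
non-negative integer `e`, with a total of `n` entries, equals
`2·C(2n-3,n-2) − C(2n-2,n-2t-2)`. -/
theorem count_svt_skew_tf (n t : ℕ) (hn : 1 ≤ n) (ht : 1 ≤ t) :
    (Nat.card {p : ℕ × (ℕ × ℕ → Finset ℕ) // IsSVT n p.1 t t p.2} : ℤ) =
      2 * zchoose (2 * (n : ℤ) - 3) ((n : ℤ) - 2)
        - zchoose (2 * (n : ℤ) - 2) ((n : ℤ) - 2 * t - 2) := by
  rw [natCard_isSVT, natCard_admissible]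
  obtain rfl | ⟨m, rfl⟩ : n = 1 ∨ ∃ m, n = m + 2 := by
    rcases n with _ | _ | m
    · omega
    · exact Or.inl rfl
    · exact Or.inr ⟨m, rfl⟩
  · rw [zchoose_of_neg (by norm_num), zchoose_of_neg (by omega)]
    simp [admissibleCount]
  · rw [admissibleCount_add_two_zero_zero m ht]
    push_cast
    ring_nf
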